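/- arXiv:1108.4496 — 6 statements merged into one kernel-verified Lean document; each statement's English description precedes it below -/
import Mathlib

section
/- For all integers n ≥ 2 and ℓ ≥ 1, with λ = ℓ/(n−1), the count M(n,ℓ) admits the integral representation M(n,ℓ) = (2π)^{−n} · (λ^{−λ}(1+λ)^{1+λ})^{n(n−1)/2} · ∫_{[−π,π]^n} F(θ) dθ, where F(θ) = exp(−iℓ·Σ_{j=1}^n θ_j) · ∏_{1≤j<k≤n} (1 − λ(e^{i(θ_j+θ_k)} − 1))^{−1}. (Each factor 1 − λ(e^{i(θ_j+θ_k)} − 1) has real part at least 1, hence is nonzero.) -/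
open MeasureTheory

/-- `M n ℓ` is the number of `n × n` symmetric matrices with nonnegative integer
entries, zero diagonal, and every row sum equal to `ℓ`. -/
noncomputable def M (n ℓ : ℕ) : ℕ :=
  Nat.card {A : Matrix (Fin n) (Fin n) ℕ //
    A.IsSymm ∧ (∀ i, A i i = 0) ∧ ∀ i, ∑ j, A i j = ℓ}

/-!
Write `1 - λ (w - 1) = (1 + λ) (1 - q w)` with `q = λ / (1 + λ) < 1` and expand every factor of
the product over pairs `j < k` as a geometric series. The product becomes a sum over loopless
multigraphs `m` on `n` vertices (edge multiplicities `m_{jk}`) of `q ^ |m| · e^{i Σ_j deg_j(m) θ_j}`;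
integrating term by term over the torus keeps exactly the multigraphs that are `ℓ`-regular, i.e. the
matrices counted by `M n ℓ`, each with weight `(2π)^n (1 + λ)^{-N} q^{nℓ/2}`, `N = n(n-1)/2`. Since
`λ N = nℓ/2`, this weight is `(2π)^n (λ^{-λ} (1 + λ)^{1 + λ})^{-N}`.
-/

open Finset Complex
open scoped Real

theorem summable_and_tsum_pi_prod {ι R : Type*} [Fintype ι] [NormedCommRing R] [NormOneClass R]
    [CompleteSpace R] (g : ι → ℕ → R) (hg : ∀ i, Summable fun k => ‖g i k‖) :
    (Summable fun m : ι → ℕ => ∏ i, ‖g i (m i)‖) ∧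
      ∑' m : ι → ℕ, ∏ i, g i (m i) = ∏ i, ∑' k, g i k := by
  -- adding one index is a Cauchy product of two absolutely convergent series
  have key := @Fintype.induction_empty_option (fun ι _ => ∀ g : ι → ℕ → R,
    (∀ i, Summable fun k => ‖g i k‖) → (Summable fun m : ι → ℕ => ∏ i, ‖g i (m i)‖) ∧
      ∑' m : ι → ℕ, ∏ i, g i (m i) = ∏ i, ∑' k, g i k) ?_ ?_ ?_ ι _
  · exact key g hg
  · intro α β _ e ih g hg
    let _ : Fintype α := Fintype.ofEquiv β e.symm
    obtain ⟨hs, ht⟩ := ih (fun a => g (e a)) fun a => hg (e a)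
    let E : (α → ℕ) ≃ (β → ℕ) := e.arrowCongr (Equiv.refl ℕ)
    have hE (m : α → ℕ) (b : β) : E m b = m (e.symm b) := rfl
    refine ⟨E.summable_iff.mp (hs.congr fun m => ?_), ?_⟩
    · rw [Function.comp_apply, ← e.prod_comp]
      simp [hE]
    · rw [← E.tsum_eq, ← e.prod_comp, ← ht]
      refine tsum_congr fun m => ?_
      rw [← e.prod_comp]
      simp [hE]
  · exact fun _ _ => ⟨.of_finite, by simp⟩
  · intro α _ ih g hg
    obtain ⟨hs, ht⟩ := ih (fun a => g (some a)) fun a => hg (some a)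
    let E : ℕ × (α → ℕ) ≃ (Option α → ℕ) := (Equiv.piOptionEquivProd (β := fun _ => ℕ)).symm
    have hs' : Summable fun m : α → ℕ => ‖∏ a, g (some a) (m a)‖ :=
      hs.of_nonneg_of_le (fun _ => norm_nonneg _) fun _ => Finset.norm_prod_le _ _
    refine ⟨E.summable_iff.mp (((hg none).mul_of_nonneg hs (fun _ => norm_nonneg _)
        fun _ => by positivity).congr fun x => ?_), ?_⟩
    · rw [Function.comp_apply, Fintype.prod_option]; rfl
    · rw [← E.tsum_eq, Fintype.prod_option, ← ht, tsum_mul_tsum_of_summable_norm (hg none) hs']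
      refine tsum_congr fun x => ?_
      rw [Fintype.prod_option]; rfl

/-- A function `m : Pairs ι → ℕ` is a loopless multigraph on `ι`, `m p` being the multiplicity of
the edge `p`; `adjMatrix m` is its adjacency matrix. -/
abbrev Pairs (ι : Type*) [LinearOrder ι] := {p : ι × ι // p.1 < p.2}

section Multigraph

variable {ι : Type*} [LinearOrder ι]

def adjMatrix {α : Type*} [Zero α] (m : Pairs ι → α) : Matrix ι ι α := fun i j =>
  if h : i < j then m ⟨(i, j), h⟩ else if h : j < i then m ⟨(j, i), h⟩ else 0

section Zero

variable {α : Type*} [Zero α] (m : Pairs ι → α)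

theorem adjMatrix_isSymm : (adjMatrix m).IsSymm := by
  ext i j
  rcases lt_trichotomy i j with h | rfl | h
  · simp [adjMatrix, Matrix.transpose_apply, h, not_lt_of_gt h]
  · rfl
  · simp [adjMatrix, Matrix.transpose_apply, h, not_lt_of_gt h]

@[simp]
theorem adjMatrix_apply_self (i : ι) : adjMatrix m i i = 0 := by
  simp [adjMatrix]

@[simp]
theorem adjMatrix_apply_pair (p : Pairs ι) : adjMatrix m p.1.1 p.1.2 = m p :=
  dif_pos p.2

@[simp]
theorem adjMatrix_apply_pair_swap (p : Pairs ι) : adjMatrix m p.1.2 p.1.1 = m p := by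
  rw [(adjMatrix_isSymm m).apply p.1.1 p.1.2, adjMatrix_apply_pair]

def adjMatrixEquiv : (Pairs ι → α) ≃ {A : Matrix ι ι α // A.IsSymm ∧ ∀ i, A i i = 0} where
  toFun m := ⟨adjMatrix m, adjMatrix_isSymm m, adjMatrix_apply_self m⟩
  invFun A p := A.1 p.1.1 p.1.2
  left_inv m := funext (adjMatrix_apply_pair m)
  right_inv := by
    rintro ⟨A, hA, hdiag⟩
    ext i j
    rcases lt_trichotomy i j with h | rfl | h
    · simp [adjMatrix, h]
    · simp [hdiag]
    · simp [adjMatrix, h, not_lt_of_gt h, hA.apply i j]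

end Zero

variable [Fintype ι]

theorem sum_pairs_eq_sum_sum_ite {β : Type*} [AddCommMonoid β] (g : ι → ι → β) :
    ∑ p : Pairs ι, g p.1.1 p.1.2 = ∑ i, ∑ j, if i < j then g i j else 0 := by
  rw [← Fintype.sum_prod_type' (f := fun i j => if i < j then g i j else 0), ← sum_filter,
    sum_subtype (p := fun x : ι × ι => x.1 < x.2) _ (fun x => by simp) fun x => g x.1 x.2]

theorem sum_sum_eq_sum_pairs {β : Type*} [AddCommMonoid β] (f : ι → ι → β)
    (hf : ∀ i, f i i = 0) :
    ∑ i, ∑ j, f i j = ∑ p : Pairs ι, (f p.1.1 p.1.2 + f p.1.2 p.1.1) := by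
  have hsplit (i j : ι) : f i j = (if i < j then f i j else 0) + (if j < i then f i j else 0) := by
    rcases lt_trichotomy i j with h | rfl | h
    · simp [h, not_lt_of_gt h]
    · simp [hf]
    · simp [h, not_lt_of_gt h]
  rw [sum_add_distrib, sum_pairs_eq_sum_sum_ite, sum_pairs_eq_sum_sum_ite (fun i j => f j i),
    sum_comm (f := fun i j => if i < j then f j i else 0), ← sum_add_distrib]
  exact sum_congr rfl fun i _ => by
    rw [← sum_add_distrib]; exact sum_congr rfl fun j _ => hsplit i j

def degree (m : Pairs ι → ℕ) (i : ι) : ℕ := ∑ j, adjMatrix m i j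

theorem sum_degree_mul {R : Type*} [CommSemiring R] (m : Pairs ι → ℕ) (x : ι → R) :
    ∑ i, (degree m i : R) * x i = ∑ p : Pairs ι, (m p : R) * (x p.1.1 + x p.1.2) := by
  simp_rw [degree, Nat.cast_sum, Finset.sum_mul]
  rw [sum_sum_eq_sum_pairs _ fun i => by simp]
  simp [mul_add]

theorem sum_degree_eq_two_mul_sum (m : Pairs ι → ℕ) : ∑ i, degree m i = 2 * ∑ p, m p := by
  simpa [← two_mul, mul_comm _ 2, ← mul_sum] using sum_degree_mul (R := ℕ) m fun _ => 1

theorem card_pairs : Fintype.card (Pairs ι) = (Fintype.card ι).choose 2 := by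
  rw [Fintype.card_subtype, Fintype.card_product_filter_lt]

end Multigraph

theorem M_eq_card (n ℓ : ℕ) :
    M n ℓ = Nat.card {m : Pairs (Fin n) → ℕ // ∀ i, degree m i = ℓ} :=
  Nat.card_congr <| ((adjMatrixEquiv.subtypeEquiv fun _ => Iff.rfl).trans
    (Equiv.subtypeSubtypeEquivSubtypeInter _
      fun A : Matrix (Fin n) (Fin n) ℕ => ∀ i, ∑ j, A i j = ℓ)).trans
    (Equiv.subtypeEquivRight fun _ => and_assoc) |>.symm

theorem integral_Icc_exp_I_int_mul (c : ℤ) :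
    ∫ x in Set.Icc (-π) π, exp (I * c * x) = if c = 0 then ((2 * π : ℝ) : ℂ) else 0 := by
  rw [integral_Icc_eq_integral_Ioc, ← intervalIntegral.integral_of_le (by linarith [Real.pi_pos])]
  split_ifs with hc
  · simp [hc]; ring
  · have hne : I * c ≠ 0 := by simp [I_ne_zero, hc]
    have hperiod : exp (I * c * π) = exp (I * c * ((-π : ℝ) : ℂ)) := by
      rw [show I * c * (π : ℂ) = I * c * ((-π : ℝ) : ℂ) + c * (2 * π * I) by push_cast; ring,
        exp_add, exp_int_mul_two_pi_mul_I, mul_one]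
    rw [integral_exp_mul_complex hne, hperiod, sub_self, zero_div]

theorem integral_box_prod_exp_I_int_mul {ι : Type*} [Fintype ι] (c : ι → ℤ) :
    ∫ θ : ι → ℝ in Set.univ.pi fun _ => Set.Icc (-π) π, ∏ j, exp (I * c j * θ j) =
      if c = 0 then ((2 * π : ℝ) : ℂ) ^ Fintype.card ι else 0 := by
  rw [volume_pi, Measure.restrict_pi_pi,
    integral_fintype_prod_eq_prod fun j (x : ℝ) => exp (I * c j * x)]
  simp_rw [integral_Icc_exp_I_int_mul, prod_ite_zero, funext_iff]
  simp

section Expansion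

variable {ι : Type*} [Fintype ι] [LinearOrder ι]

theorem exp_mul_prod_pow_eq (ℓ : ℕ) (q : ℂ) (m : Pairs ι → ℕ) (θ : ι → ℝ) :
    exp (-I * ℓ * ∑ j, (θ j : ℂ)) * ∏ p : Pairs ι, (q * exp (I * (θ p.1.1 + θ p.1.2))) ^ m p =
      q ^ (∑ p, m p) * ∏ j, exp (I * ((degree m j : ℤ) - ℓ : ℤ) * θ j) := by
  have hpairs : ∏ p : Pairs ι, exp (I * (θ p.1.1 + θ p.1.2)) ^ m p =
      exp (I * ∑ j, (degree m j : ℂ) * θ j) := by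
    rw [sum_degree_mul, mul_sum, exp_sum]
    refine prod_congr rfl fun p _ => ?_
    rw [← exp_nat_mul]; ring_nf
  rw [prod_congr rfl fun p _ => mul_pow q _ (m p), prod_mul_distrib, prod_pow_eq_pow_sum, hpairs,
    mul_left_comm, ← exp_add, ← exp_sum]
  congr 2
  push_cast
  simp only [mul_sum, ← sum_add_distrib]
  exact sum_congr rfl fun j _ => by ring

theorem exp_mul_prod_inv_one_sub_eq_tsum (ℓ : ℕ) {q : ℂ} (hq : ‖q‖ < 1) (θ : ι → ℝ) :
    exp (-I * ℓ * ∑ j, (θ j : ℂ)) * ∏ p : Pairs ι, (1 - q * exp (I * (θ p.1.1 + θ p.1.2)))⁻¹ =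
      ∑' m : Pairs ι → ℕ, q ^ (∑ p, m p) * ∏ j, exp (I * ((degree m j : ℤ) - ℓ : ℤ) * θ j) := by
  have hnorm (p : Pairs ι) : ‖q * exp (I * (θ p.1.1 + θ p.1.2))‖ = ‖q‖ := by
    rw [norm_mul, ← ofReal_add, norm_exp_I_mul_ofReal, mul_one]
  have hgeom (p : Pairs ι) := tsum_geometric_of_norm_lt_one ((hnorm p).trans_lt hq)
  simp_rw [← hgeom, ← exp_mul_prod_pow_eq, tsum_mul_left]
  rw [(summable_and_tsum_pi_prod _ fun p => ?_).2]
  simpa only [norm_pow, hnorm] using summable_geometric_of_lt_one (norm_nonneg q) hq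

theorem integral_box_exp_mul_prod_inv_one_sub (ℓ : ℕ) {q : ℂ} (hq : ‖q‖ < 1) :
    ∫ θ : ι → ℝ in Set.univ.pi fun _ => Set.Icc (-π) π,
        exp (-I * ℓ * ∑ j, (θ j : ℂ)) * ∏ p : Pairs ι, (1 - q * exp (I * (θ p.1.1 + θ p.1.2)))⁻¹ =
      ((2 * π : ℝ) : ℂ) ^ Fintype.card ι *
        ∑' m : Pairs ι → ℕ, if ∀ i, degree m i = ℓ then q ^ ∑ p, m p else 0 := by
  set box : Set (ι → ℝ) := Set.univ.pi fun _ => Set.Icc (-π) π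
  set term : (Pairs ι → ℕ) → (ι → ℝ) → ℂ := fun m θ =>
    q ^ (∑ p, m p) * ∏ j, exp (I * ((degree m j : ℤ) - ℓ : ℤ) * θ j)
  have hintegral (m : Pairs ι → ℕ) : ∫ θ in box, term m θ =
      ((2 * π : ℝ) : ℂ) ^ Fintype.card ι * if ∀ i, degree m i = ℓ then q ^ ∑ p, m p else 0 := by
    simp only [term, box]
    rw [integral_const_mul, integral_box_prod_exp_I_int_mul]
    simp only [funext_iff, Pi.zero_apply, sub_eq_zero, Nat.cast_inj]
    split_ifs <;> ring
  have hnorm (m : Pairs ι → ℕ) (θ : ι → ℝ) : ‖term m θ‖ = ‖q‖ ^ ∑ p, m p := by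
    simp [term, norm_exp]
  have hsummable : Summable fun m : Pairs ι → ℕ => ‖q‖ ^ ∑ p, m p := by
    simpa only [norm_pow, prod_pow_eq_pow_sum] using (summable_and_tsum_pi_prod (fun _ k => q ^ k)
      fun _ => by simpa only [norm_pow] using summable_geometric_of_lt_one (norm_nonneg q) hq).1
  simp_rw [exp_mul_prod_inv_one_sub_eq_tsum ℓ hq]
  rw [← integral_tsum_of_summable_integral_norm (μ := volume.restrict box) (F := term),
    ← tsum_mul_left]
  · exact tsum_congr hintegral
  · exact fun m => (by fun_prop : Continuous (term m)).continuousOn.integrableOn_compact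
      (isCompact_univ_pi fun _ => isCompact_Icc)
  · simp_rw [hnorm, integral_const]
    exact hsummable.const_smul _

end Expansion

theorem tsum_ite_eq_natCard {α R : Type*} [AddCommGroupWithOne R] [TopologicalSpace R]
    [IsTopologicalAddGroup R] [T2Space R] {p : α → Prop} [DecidablePred p] {f : α → R}
    (hf : ∀ x, p x → f x = 1) : ∑' x, (if p x then f x else 0) = Nat.card {x // p x} := by
  calc ∑' x, (if p x then f x else 0) = ∑' x, {x | p x}.indicator f x := by
        simp only [Set.indicator_apply, Set.mem_ofPred_eq]
    _ = ∑' x : {x | p x}, (1 : R) := by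
        rw [← _root_.tsum_subtype]; exact tsum_congr fun x => hf x x.2
    _ = Nat.card {x // p x} := by rw [tsum_const, nsmul_one]; rfl

theorem rpow_neg_mul_one_add_rpow_pow_mul_eq_one {x : ℝ} (hx : 0 ≤ x) (N E : ℕ)
    (hE : (E : ℝ) = x * N) :
    (x ^ (-x) * (1 + x) ^ (1 + x)) ^ N * ((1 + x)⁻¹) ^ N * (x / (1 + x)) ^ E = 1 := by
  have hx1 : 0 < 1 + x := by linarith
  have hbase : x ^ (-x) * (1 + x) ^ (1 + x) = (1 + x) * (x / (1 + x)) ^ (-x) := by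
    rw [Real.div_rpow hx hx1.le, Real.rpow_neg hx1.le, Real.rpow_add hx1, Real.rpow_one]
    field_simp
  have hpow : ((x / (1 + x)) ^ (-x)) ^ N = ((x / (1 + x)) ^ E)⁻¹ := by
    rw [← Real.rpow_mul_natCast (by positivity), neg_mul, ← hE, Real.rpow_neg (by positivity),
      Real.rpow_natCast]
  have hne : (x / (1 + x)) ^ E ≠ 0 := by
    rcases hx.eq_or_lt with rfl | hpos
    · simp_all
    · positivity
  rw [hbase, mul_pow, hpow, inv_pow]
  field_simp

theorem inv_one_sub_mul_sub_one {a : ℂ} (ha : 1 + a ≠ 0) (z : ℂ) :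
    (1 - a * (z - 1))⁻¹ = (1 + a)⁻¹ * (1 - a / (1 + a) * z)⁻¹ := by
  rw [← mul_inv]
  field_simp
  ring

theorem prod_filter_lt_inv_one_sub_mul_sub_one {ι : Type*} [Fintype ι] [LinearOrder ι] {a : ℂ}
    (ha : 1 + a ≠ 0) (w : ι × ι → ℂ) :
    ∏ p ∈ univ.filter (fun p : ι × ι => p.1 < p.2), (1 - a * (w p - 1))⁻¹ =
      (1 + a)⁻¹ ^ Fintype.card (Pairs ι) * ∏ p : Pairs ι, (1 - a / (1 + a) * w p)⁻¹ := by
  rw [prod_subtype (F := inferInstance) (p := fun p : ι × ι => p.1 < p.2) _ (fun p => by simp)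
    fun p => (1 - a * (w p - 1))⁻¹]
  simp_rw [inv_one_sub_mul_sub_one ha, prod_mul_distrib, prod_const, card_univ]

theorem natCast_eq_div_mul_of_two_mul_eq {n ℓ E : ℕ} (hn : 2 ≤ n) (h : 2 * E = n * ℓ) :
    (E : ℝ) = ℓ / (n - 1) * (n * (n - 1) / 2 : ℕ) := by
  have hn1 : (n : ℝ) - 1 ≠ 0 := by linarith [show (2 : ℝ) ≤ n by exact_mod_cast hn]
  rw [← Nat.choose_two_right, Nat.cast_choose_two]
  field_simp
  linear_combination (by exact_mod_cast h : (2 : ℝ) * E = n * ℓ)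

theorem stmt_3_general (n ℓ : ℕ) (hn : 2 ≤ n)
    (lam : ℝ) (hlam : lam = (ℓ : ℝ) / ((n : ℝ) - 1)) :
    (M n ℓ : ℂ) =
      ((2 * Real.pi : ℝ) : ℂ) ^ (-(n : ℤ)) *
      (((lam ^ (-lam) * (1 + lam) ^ (1 + lam) : ℝ)) : ℂ) ^ (n * (n - 1) / 2) *
      ∫ θ : Fin n → ℝ in Set.univ.pi (fun _ : Fin n => Set.Icc (-Real.pi) Real.pi),
        Complex.exp (-Complex.I * (ℓ : ℂ) * ∑ j, (θ j : ℂ)) *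
        ∏ p ∈ Finset.univ.filter (fun p : Fin n × Fin n => p.1 < p.2),
          (1 - (lam : ℂ) * (Complex.exp (Complex.I * ((θ p.1 : ℂ) + (θ p.2 : ℂ))) - 1))⁻¹ := by
  have hlam0 : 0 ≤ lam :=
    hlam ▸ div_nonneg ℓ.cast_nonneg (by linarith [show (2 : ℝ) ≤ n by exact_mod_cast hn])
  have hlam1 : (1 + lam : ℂ) ≠ 0 := mod_cast (by linarith : (0 : ℝ) < 1 + lam).ne'
  have hq : ‖(lam / (1 + lam) : ℂ)‖ < 1 := by
    rw [show (lam / (1 + lam) : ℂ) = ((lam / (1 + lam) : ℝ) : ℂ) by push_cast; rfl, norm_real,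
      Real.norm_of_nonneg (by positivity), div_lt_one (by positivity)]
    linarith
  have hterm (m : Pairs (Fin n) → ℕ) (hm : ∀ i, degree m i = ℓ) :
      (((lam ^ (-lam) * (1 + lam) ^ (1 + lam) : ℝ)) : ℂ) ^ (n * (n - 1) / 2) *
        (1 + lam : ℂ)⁻¹ ^ (n * (n - 1) / 2) * (lam / (1 + lam) : ℂ) ^ ∑ p, m p = 1 := by
    have hsum : 2 * ∑ p, m p = n * ℓ := by rw [← sum_degree_eq_two_mul_sum]; simp [hm]
    exact_mod_cast rpow_neg_mul_one_add_rpow_pow_mul_eq_one hlam0 _ _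
      (hlam ▸ natCast_eq_div_mul_of_two_mul_eq hn hsum)
  simp_rw [prod_filter_lt_inv_one_sub_mul_sub_one hlam1, card_pairs, Fintype.card_fin,
    Nat.choose_two_right, mul_left_comm (exp _)]
  rw [integral_const_mul, integral_box_exp_mul_prod_inv_one_sub ℓ hq, Fintype.card_fin, M_eq_card,
    ← tsum_ite_eq_natCard hterm]
  have h2pi : ((2 * π : ℝ) : ℂ) ^ n ≠ 0 := pow_ne_zero _ (mod_cast Real.two_pi_pos.ne')
  simp_rw [← tsum_mul_left, zpow_neg, zpow_natCast, mul_ite, mul_zero]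
  refine tsum_congr fun m => ?_
  split_ifs
  · field_simp
  · rfl

theorem stmt_3 (n ℓ : ℕ) (hn : 2 ≤ n) (hℓ : 1 ≤ ℓ)
    (lam : ℝ) (hlam : lam = (ℓ : ℝ) / ((n : ℝ) - 1)) :
    (M n ℓ : ℂ) =
      ((2 * Real.pi : ℝ) : ℂ) ^ (-(n : ℤ)) *
      (((lam ^ (-lam) * (1 + lam) ^ (1 + lam) : ℝ)) : ℂ) ^ (n * (n - 1) / 2) *
      ∫ θ : Fin n → ℝ in Set.univ.pi (fun _ : Fin n => Set.Icc (-Real.pi) Real.pi),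
        Complex.exp (-Complex.I * (ℓ : ℂ) * ∑ j, (θ j : ℂ)) *
        ∏ p ∈ Finset.univ.filter (fun p : Fin n × Fin n => p.1 < p.2),
          (1 - (lam : ℂ) * (Complex.exp (Complex.I * ((θ p.1 : ℂ) + (θ p.2 : ℂ))) - 1))⁻¹ :=
  stmt_3_general n ℓ hn lam hlam
end

section
/- Let n ≥ 2, let λ > 0, set c = 1 − √((n−2)/(2(n−1))), and for z ∈ ℝ^n define θⱼ = (zⱼ − (c/n)Σ_{k=1}^n zₖ)/(1+λ) and μₘ = Σ_{j=1}^n zⱼ^m. Then (1+λ)·Σ_{j=1}^n θⱼ = (1−c)·μ₁ and (1+λ)²·Σ_{1≤j<k≤n} (θⱼ+θₖ)² = (n−2)·μ₂. -/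
/-!
Write `w j = z j - (c / n) * ∑ k, z k`, so that `(1 + λ) θ j = w j`. Over any ordered index set,
`∑_{j<k} (w j + w k)² = (n - 2) ∑ w j² + (∑ w j)²`, and centring gives `∑ w j = (1 - c) μ₁` and
`∑ w j² = μ₂ - (2 - c)(c / n) μ₁²`. The `μ₁²` terms cancel exactly when
`(n - 2)(2 - c) c = n (1 - c)²`, i.e. `(1 - c)² = (n - 2) / (2 (n - 1))`, which is how `c` is chosen.
-/

open Finset

section PairSums

variable {ι R : Type*} [Fintype ι] [LinearOrder ι] [CommRing R]

lemma sum_filter_lt_add_swap (g : ι → ι → R) :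
    ∑ p ∈ univ.filter (fun p : ι × ι => p.1 < p.2), (g p.1 p.2 + g p.2 p.1)
      = ∑ p : ι × ι, g p.1 p.2 - ∑ i, g i i := by
  have hswap : ∑ p ∈ univ.filter (fun p : ι × ι => p.1 < p.2), g p.2 p.1
      = ∑ p ∈ univ.filter (fun p : ι × ι => p.2 < p.1), g p.1 p.2 :=
    sum_equiv (Equiv.prodComm ι ι) (by simp) (by simp)
  have hdiag : ∑ p ∈ univ.filter (fun p : ι × ι => p.1 = p.2), g p.1 p.2 = ∑ i, g i i := by
    simp [sum_filter, Fintype.sum_prod_type]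
  have htrichotomy : ∑ p : ι × ι, g p.1 p.2
      = ∑ p ∈ univ.filter (fun p : ι × ι => p.1 < p.2), g p.1 p.2
        + ∑ p ∈ univ.filter (fun p : ι × ι => p.2 < p.1), g p.1 p.2
        + ∑ p ∈ univ.filter (fun p : ι × ι => p.1 = p.2), g p.1 p.2 := by
    simp only [sum_filter, ← sum_add_distrib]
    refine sum_congr rfl fun p _ => ?_
    rcases lt_trichotomy p.1 p.2 with h | h | h
    · simp [h, h.not_gt, h.ne]
    · simp [h]
    · simp [h, h.not_gt, h.ne']
  rw [sum_add_distrib, hswap, htrichotomy, hdiag, add_sub_cancel_right]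

lemma sum_filter_lt_add_sq (w : ι → R) :
    ∑ p ∈ univ.filter (fun p : ι × ι => p.1 < p.2), (w p.1 + w p.2) ^ 2
      = (Fintype.card ι - 2 : R) * ∑ i, w i ^ 2 + (∑ i, w i) ^ 2 := by
  have hsplit : ∀ a b, (w a + w b) ^ 2 = (w a ^ 2 + w a * w b) + (w b ^ 2 + w b * w a) :=
    fun a b => by ring
  simp only [hsplit, sum_filter_lt_add_swap (fun a b => w a ^ 2 + w a * w b),
    Fintype.sum_prod_type, sum_add_distrib, sum_const, card_univ, nsmul_eq_mul, sq (∑ i, w i),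
    sum_mul_sum]
  rw [← mul_sum]
  simp only [← sq]
  ring

end PairSums

section Centering

variable {ι R : Type*} [Fintype ι] [CommRing R]

lemma sum_sub_mul_sum (z : ι → R) (a : R) :
    ∑ j, (z j - a * ∑ k, z k) = (1 - Fintype.card ι * a) * ∑ k, z k := by
  simp only [sum_sub_distrib, sum_const, card_univ, nsmul_eq_mul]
  ring

lemma sum_sub_mul_sum_sq (z : ι → R) (a : R) :
    ∑ j, (z j - a * ∑ k, z k) ^ 2
      = ∑ j, z j ^ 2 - (2 - Fintype.card ι * a) * a * (∑ k, z k) ^ 2 := by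
  have hexpand : ∀ j, (z j - a * ∑ k, z k) ^ 2
      = z j ^ 2 - 2 * a * (∑ k, z k) * z j + (a * ∑ k, z k) ^ 2 := fun j => by ring
  simp only [hexpand, sum_add_distrib, sum_sub_distrib, ← mul_sum, sum_const, card_univ,
    nsmul_eq_mul]
  ring

end Centering

theorem stmt_6 (n : ℕ) (hn : 2 ≤ n) (lam : ℝ) (hlam : 0 < lam)
    (c : ℝ) (hc : c = 1 - Real.sqrt (((n : ℝ) - 2) / (2 * ((n : ℝ) - 1))))
    (z : Fin n → ℝ)
    (θ : Fin n → ℝ) (hθ : ∀ j, θ j = (z j - (c / n) * ∑ k, z k) / (1 + lam))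
    (μ : ℕ → ℝ) (hμ : ∀ m, μ m = ∑ j, z j ^ m) :
    (1 + lam) * ∑ j, θ j = (1 - c) * μ 1 ∧
    (1 + lam) ^ 2 * ∑ p ∈ Finset.univ.filter (fun p : Fin n × Fin n => p.1 < p.2),
        (θ p.1 + θ p.2) ^ 2 = ((n : ℝ) - 2) * μ 2 := by
  have hlam' : 1 + lam ≠ 0 := by linarith
  have hn' : (2 : ℝ) ≤ n := by exact_mod_cast hn
  have hc_sq : (1 - c) ^ 2 * (2 * ((n : ℝ) - 1)) = n - 2 := by
    rw [hc, sub_sub_cancel, Real.sq_sqrt (div_nonneg (by linarith) (by linarith)),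
      div_mul_cancel₀ _ (by linarith)]
  set w : Fin n → ℝ := fun j => z j - c / n * ∑ k, z k
  have hθw : ∀ j, (1 + lam) * θ j = w j := fun j => by rw [hθ, mul_div_cancel₀ _ hlam']
  have hw_sum : ∑ j, w j = (1 - c) * μ 1 := by
    rw [sum_sub_mul_sum, Fintype.card_fin, mul_div_cancel₀ _ (by linarith), hμ]
    simp
  have hw_sq : ∑ j, w j ^ 2 = μ 2 - (2 - c) * (c / n) * μ 1 ^ 2 := by
    rw [sum_sub_mul_sum_sq, Fintype.card_fin, mul_div_cancel₀ _ (by linarith), hμ, hμ]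
    simp
  refine ⟨by rw [mul_sum, ← hw_sum]; exact sum_congr rfl fun j _ => hθw j, ?_⟩
  calc (1 + lam) ^ 2 * ∑ p ∈ univ.filter (fun p : Fin n × Fin n => p.1 < p.2),
        (θ p.1 + θ p.2) ^ 2
      = ∑ p ∈ univ.filter (fun p : Fin n × Fin n => p.1 < p.2), (w p.1 + w p.2) ^ 2 := by
        rw [mul_sum]
        refine sum_congr rfl fun p _ => ?_
        rw [← hθw, ← hθw]
        ring
    _ = (n - 2) * ∑ j, w j ^ 2 + (∑ j, w j) ^ 2 := by
        rw [sum_filter_lt_add_sq, Fintype.card_fin]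
    _ = (n - 2) * μ 2 := by
        have hcoeff : (n - 2) * ((2 - c) * (c / n)) = (1 - c) ^ 2 := by
          field_simp
          linear_combination -hc_sq
        rw [hw_sum, hw_sq]
        linear_combination -μ 1 ^ 2 * hcoeff
end

section
/- Let n ≥ 2, let λ > 0, set c = 1 − √((n−2)/(2(n−1))), and for z ∈ ℝ^n define θⱼ = (zⱼ − (c/n)Σ_{k=1}^n zₖ)/(1+λ) and μₘ = Σ_{j=1}^n zⱼ^m. Then (1+λ)⁴·Σ_{1≤j<k≤n} (θⱼ+θₖ)⁴ = (n−8)·μ₄ + 3·μ₂² + (4(1−2c) + 32c/n)·μ₁μ₃ − (24c(1−c)/n + 48c²/n²)·μ₁²μ₂ + (8c²(1−c)(3−c)/n² + 8c³(4−c)/n³)·μ₁⁴. -/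
/-!
With `t = c μ₁ / n`, the numbers `aⱼ = (1 + λ) θⱼ = zⱼ - t` satisfy
`2 ∑_{j<k} (aⱼ + aₖ)⁴ = ∑_{j,k} (aⱼ + aₖ)⁴ - 16 ∑ⱼ aⱼ⁴`, and the full double sum expands
into products of power sums of `a`. The binomial theorem rewrites the power sums of `a` through
the `μₘ` and `t`, and clearing the powers of `n` leaves a polynomial identity.
-/

open Finset

theorem sum_sum_eq_two_nsmul_sum_lt_add_sum_diag {ι M : Type*} [Fintype ι] [LinearOrder ι]
    [AddCommMonoid M] (f : ι → ι → M) (hf : ∀ j k, f j k = f k j) :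
    ∑ j, ∑ k, f j k
      = 2 • ∑ p ∈ univ.filter (fun p : ι × ι => p.1 < p.2), f p.1 p.2 + ∑ j, f j j := by
  have hswap : ∑ p ∈ univ.filter (fun p : ι × ι => ¬ p.1 < p.2 ∧ p.1 ≠ p.2), f p.1 p.2
      = ∑ p ∈ univ.filter (fun p : ι × ι => p.1 < p.2), f p.1 p.2 :=
    sum_nbij' Prod.swap Prod.swap (by simp; grind) (by simp; grind) (by simp) (by simp)
      (fun p _ => hf _ _)
  have hdiag : ∑ p ∈ univ.filter (fun p : ι × ι => ¬ p.1 < p.2 ∧ ¬ p.1 ≠ p.2), f p.1 p.2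
      = ∑ j, f j j :=
    sum_nbij' Prod.fst (fun j => (j, j)) (by simp) (by simp) (by simp) (by simp)
      (by simp +contextual)
  have hlt := sum_filter_add_sum_filter_not univ (fun p : ι × ι => p.1 < p.2)
    (fun p => f p.1 p.2)
  have hnlt := sum_filter_add_sum_filter_not (univ.filter fun p : ι × ι => ¬ p.1 < p.2)
    (fun p => p.1 ≠ p.2) (fun p => f p.1 p.2)
  rw [filter_filter, filter_filter, hswap, hdiag] at hnlt
  rw [← sum_product', univ_product_univ, ← hlt, ← hnlt, two_nsmul, add_assoc]

theorem sum_sum_add_pow_four {ι R : Type*} [Fintype ι] [CommRing R] (x : ι → R) :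
    ∑ j, ∑ k, (x j + x k) ^ 4
      = 2 * Fintype.card ι * ∑ j, x j ^ 4 + 8 * (∑ j, x j) * ∑ j, x j ^ 3
        + 6 * (∑ j, x j ^ 2) ^ 2 := by
  have hexpand (a b : R) :
      (a + b) ^ 4 = a ^ 4 + 4 * a ^ 3 * b + 6 * a ^ 2 * b ^ 2 + 4 * a * b ^ 3 + b ^ 4 := by
    ring
  simp only [hexpand, sum_add_distrib, ← mul_sum, ← sum_mul, sum_const, card_univ, nsmul_eq_mul]
  ring

theorem sum_sub_const_pow {ι R : Type*} [Fintype ι] [CommRing R] (z : ι → R) (t : R) (m : ℕ) :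
    ∑ j, (z j - t) ^ m
      = ∑ i ∈ range (m + 1), (-1) ^ (i + m) * t ^ (m - i) * m.choose i * ∑ j, z j ^ i := by
  simp_rw [sub_pow, mul_sum]
  rw [sum_comm]
  refine sum_congr rfl fun i _ => sum_congr rfl fun j _ => by ring

theorem sum_lt_add_pow_four {ι K : Type*} [Fintype ι] [LinearOrder ι] [Field K] [NeZero (2 : K)]
    (x : ι → K) :
    ∑ p ∈ univ.filter (fun p : ι × ι => p.1 < p.2), (x p.1 + x p.2) ^ 4
      = (Fintype.card ι - 8) * ∑ j, x j ^ 4 + 4 * (∑ j, x j) * ∑ j, x j ^ 3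
        + 3 * (∑ j, x j ^ 2) ^ 2 := by
  have h := sum_sum_eq_two_nsmul_sum_lt_add_sum_diag (fun j k => (x j + x k) ^ 4)
    fun _ _ => by ring
  have hdiag : ∑ j, (x j + x j) ^ 4 = 16 * ∑ j, x j ^ 4 := by
    rw [mul_sum]; exact sum_congr rfl fun _ _ => by ring
  rw [sum_sum_add_pow_four, hdiag, two_nsmul] at h
  apply mul_left_cancel₀ (two_ne_zero' K)
  linear_combination -h

theorem stmt_8_general (n : ℕ) (hn : 2 ≤ n) (lam : ℝ) (hlam : 0 < lam)
    (c : ℝ)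
    (z : Fin n → ℝ)
    (θ : Fin n → ℝ) (hθ : ∀ j, θ j = (z j - (c / n) * ∑ k, z k) / (1 + lam))
    (μ : ℕ → ℝ) (hμ : ∀ m, μ m = ∑ j, z j ^ m) :
    (1 + lam) ^ 4 * ∑ p ∈ Finset.univ.filter (fun p : Fin n × Fin n => p.1 < p.2),
        (θ p.1 + θ p.2) ^ 4
      = ((n : ℝ) - 8) * μ 4 + 3 * μ 2 ^ 2 + (4 * (1 - 2 * c) + 32 * c / n) * (μ 1 * μ 3)
        - (24 * c * (1 - c) / n + 48 * c ^ 2 / (n : ℝ) ^ 2) * (μ 1 ^ 2 * μ 2)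
        + (8 * c ^ 2 * (1 - c) * (3 - c) / (n : ℝ) ^ 2 + 8 * c ^ 3 * (4 - c) / (n : ℝ) ^ 3) *
          μ 1 ^ 4 := by
  have hμ1 : ∑ k, z k = μ 1 := by simp [hμ]
  simp only [hμ1] at hθ
  generalize ht : c / n * μ 1 = t at hθ
  have hscale : (1 + lam) ^ 4 * ∑ p ∈ univ.filter (fun p : Fin n × Fin n => p.1 < p.2),
      (θ p.1 + θ p.2) ^ 4
        = ∑ p ∈ univ.filter (fun p : Fin n × Fin n => p.1 < p.2),
      ((z p.1 - t) + (z p.2 - t)) ^ 4 := by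
    have : 1 + lam ≠ 0 := by positivity
    rw [mul_sum]
    exact sum_congr rfl fun p _ => by rw [hθ, hθ]; field_simp
  have hshift (m : ℕ) : ∑ j, (z j - t) ^ m
      = ∑ i ∈ range (m + 1), (-1) ^ (i + m) * t ^ (m - i) * m.choose i * μ i := by
    simp only [sum_sub_const_pow, hμ]
  have hμ0 : μ 0 = n := by simp [hμ]
  have hn0 : (n : ℝ) ≠ 0 := Nat.cast_ne_zero.mpr (by omega)
  rw [hscale, sum_lt_add_pow_four (fun j => z j - t), Fintype.card_fin, hshift 4, hshift 2,
    show ∑ j, (z j - t) = _ by simpa using hshift 1, hshift 3]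
  subst ht
  norm_num [sum_range_succ, Nat.choose_two_right, hμ0]
  field_simp
  ring

theorem stmt_8 (n : ℕ) (hn : 2 ≤ n) (lam : ℝ) (hlam : 0 < lam)
    (c : ℝ) (hc : c = 1 - Real.sqrt (((n : ℝ) - 2) / (2 * ((n : ℝ) - 1))))
    (z : Fin n → ℝ)
    (θ : Fin n → ℝ) (hθ : ∀ j, θ j = (z j - (c / n) * ∑ k, z k) / (1 + lam))
    (μ : ℕ → ℝ) (hμ : ∀ m, μ m = ∑ j, z j ^ m) :
    (1 + lam) ^ 4 * ∑ p ∈ Finset.univ.filter (fun p : Fin n × Fin n => p.1 < p.2),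
        (θ p.1 + θ p.2) ^ 4
      = ((n : ℝ) - 8) * μ 4 + 3 * μ 2 ^ 2 + (4 * (1 - 2 * c) + 32 * c / n) * (μ 1 * μ 3)
        - (24 * c * (1 - c) / n + 48 * c ^ 2 / (n : ℝ) ^ 2) * (μ 1 ^ 2 * μ 2)
        + (8 * c ^ 2 * (1 - c) * (3 - c) / (n : ℝ) ^ 2 + 8 * c ^ 3 * (4 - c) / (n : ℝ) ^ 3) *
          μ 1 ^ 4 :=
  stmt_8_general n hn lam hlam c z θ hθ μ hμ
end

section
/- There is an absolute constant C > 0 such that for every λ > 0 and every real X there exists a complex number η with |η| ≤ C·(λ + λ⁵)·|X|⁵ such that (1 − λ(e^{iX} − 1))^{−1} = exp(iλX − (1/2)λ(1+λ)X² − (i/6)λ(1+λ)(1+2λ)X³ + (1/24)λ(1+λ)(1+6λ+6λ²)X⁴ + η). -/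
/-!
Let `K(y) = log (1 - λ(e^y - 1))⁻¹`; the exponent in the statement is its quartic Taylor
polynomial `P` at `y = iX`, and `η := K(iX) - P(iX)`. With `ρ = (1 + λ)|X|` the target
`λ(1 + λ)⁴|X|⁵` equals `(λ / (1 + λ)) ρ⁵`.

If `ρ ≥ 1/4`, both `‖K(iX)‖ ≤ 3λ|X|` (because `Re (1 - λ(e^{iX} - 1)) ≥ 1`) and the monomials of
`P` are `O((λ / (1 + λ)) ρᵏ)` with `k ≤ 4`, hence `O((λ / (1 + λ)) ρ⁵)`.
If `ρ ≤ 1/4`, then `u = λ(e^y - 1)` is small and `K = ∑_{k ≤ 4} uᵏ / k + O(‖u‖⁵)`. Expanding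
`(e^y - 1)ᵏ = ∑ⱼ (-1)^(k-j) C(k,j) e^{jy}` turns the error in each `uᵏ` into remainders of the
exponential series at `jy`, which are `O(‖y‖⁵)`.
-/

open Complex Finset
open scoped Nat

/-- The Taylor polynomial of degree `< n` of `(e^y - 1)^k`, read off from
`(e^y - 1)^k = ∑ⱼ (-1)^(k-j) C(k,j) e^{jy}`. -/
noncomputable def expSubOnePowTaylor (n k : ℕ) (y : ℂ) : ℂ :=
  ∑ j ∈ range (k + 1), (-1) ^ (k - j) * (k.choose j : ℂ) * ∑ m ∈ range n, ((j : ℂ) * y) ^ m / m !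

theorem exp_sub_one_pow_eq_sum (k : ℕ) (y : ℂ) :
    (exp y - 1) ^ k = ∑ j ∈ range (k + 1), (-1) ^ (k - j) * (k.choose j : ℂ) * exp (j * y) := by
  rw [sub_eq_add_neg, add_pow]
  refine sum_congr rfl fun j _ => ?_
  rw [exp_nat_mul]
  ring

theorem norm_exp_sub_one_pow_sub_expSubOnePowTaylor_le {n k : ℕ} (hn : 0 < n) {y : ℂ}
    (hy : k * ‖y‖ ≤ 1) :
    ‖(exp y - 1) ^ k - expSubOnePowTaylor n k y‖ ≤
      2 ^ k * ((k * ‖y‖) ^ n * ((n.succ : ℝ) * (n ! * n : ℝ)⁻¹)) := by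
  have hchoose : (2 : ℝ) ^ k = ∑ j ∈ range (k + 1), (k.choose j : ℝ) := by
    exact_mod_cast (Nat.sum_range_choose k).symm
  rw [exp_sub_one_pow_eq_sum, expSubOnePowTaylor, ← sum_sub_distrib, hchoose, sum_mul]
  refine (norm_sum_le _ _).trans (sum_le_sum fun j hj => ?_)
  have hjy : ‖(j : ℂ) * y‖ ≤ k * ‖y‖ := by
    rw [norm_mul, Complex.norm_natCast]
    gcongr
    exact_mod_cast Nat.lt_succ_iff.mp (mem_range.mp hj)
  rw [← mul_sub, norm_mul, norm_mul, norm_pow, norm_neg, norm_one, one_pow, one_mul,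
    Complex.norm_natCast]
  gcongr
  exact (exp_bound (hjy.trans hy) hn).trans (by gcongr)

theorem norm_exp_sub_one_pow_sub_expSubOnePowTaylor_five_le {k : ℕ} (hk : k ≤ 4) {y : ℂ}
    (hy : 4 * ‖y‖ ≤ 1) :
    ‖(exp y - 1) ^ k - expSubOnePowTaylor 5 k y‖ ≤ 164 * ‖y‖ ^ 5 := by
  have hk' : (k : ℝ) ≤ 4 := by exact_mod_cast hk
  refine (norm_exp_sub_one_pow_sub_expSubOnePowTaylor_le (by norm_num) ?_).trans ?_
  · nlinarith [norm_nonneg y]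
  calc (2 : ℝ) ^ k * ((k * ‖y‖) ^ 5 * ((Nat.succ 5 : ℝ) * ((5 ! : ℕ) * (5 : ℕ) : ℝ)⁻¹))
      ≤ 2 ^ 4 * ((4 * ‖y‖) ^ 5 * ((Nat.succ 5 : ℝ) * ((5 ! : ℕ) * (5 : ℕ) : ℝ)⁻¹)) := by
        gcongr
        norm_num
    _ ≤ 164 * ‖y‖ ^ 5 := by
        norm_num [Nat.factorial]
        nlinarith [pow_nonneg (norm_nonneg y) 5]

/-- The coefficients are `κₖ / k!`, where `κₖ` are the cumulants of the geometric law with mean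
`λ`, whose cumulant generating function is `y ↦ log (1 - λ(e^y - 1))⁻¹`. -/
noncomputable def geomCgfTaylor (lam : ℝ) (y : ℂ) : ℂ :=
  (lam : ℂ) * y + ((lam * (1 + lam) / 2 : ℝ) : ℂ) * y ^ 2
    + ((lam * (1 + lam) * (1 + 2 * lam) / 6 : ℝ) : ℂ) * y ^ 3
    + ((lam * (1 + lam) * (1 + 6 * lam + 6 * lam ^ 2) / 24 : ℝ) : ℂ) * y ^ 4

theorem geomCgfTaylor_eq_sum (lam : ℝ) (y : ℂ) :
    geomCgfTaylor lam y =
      ∑ k ∈ range 4, (lam : ℂ) ^ (k + 1) / (k + 1 : ℕ) * expSubOnePowTaylor 5 (k + 1) y := by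
  simp only [geomCgfTaylor, expSubOnePowTaylor, sum_range_succ, sum_range_zero, Nat.factorial,
    Nat.choose]
  push_cast
  ring

theorem geomCgfTaylor_I_mul (lam X : ℝ) :
    geomCgfTaylor lam (I * X) = I * lam * X
      - (1 / 2 : ℂ) * lam * (1 + lam) * X ^ 2
      - (I / 6) * lam * (1 + lam) * (1 + 2 * lam) * X ^ 3
      + (1 / 24 : ℂ) * lam * (1 + lam) * (1 + 6 * lam + 6 * lam ^ 2) * X ^ 4 := by
  simp only [geomCgfTaylor]
  push_cast
  linear_combination (lam * (1 + lam) / 2 * X ^ 2 + lam * (1 + lam) * (1 + 2 * lam) / 6 * I * X ^ 3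
    + lam * (1 + lam) * (1 + 6 * lam + 6 * lam ^ 2) / 24 * (I ^ 2 - 1) * X ^ 4) * I_sq

theorem norm_geomCgfTaylor_le {lam : ℝ} (hlam : 0 ≤ lam) (y : ℂ) :
    ‖geomCgfTaylor lam y‖ ≤ ∑ k ∈ range 4, lam * (1 + lam) ^ k * ‖y‖ ^ (k + 1) := by
  refine norm_add₄_le.trans ?_
  simp only [sum_range_succ, sum_range_zero, zero_add, pow_zero, pow_one, mul_one, norm_mul,
    norm_pow, Complex.norm_real, Real.norm_eq_abs]
  have h2 : |lam * (1 + lam) / 2| ≤ lam * (1 + lam) := by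
    rw [abs_of_nonneg (by positivity)]
    nlinarith
  have h3 : |lam * (1 + lam) * (1 + 2 * lam) / 6| ≤ lam * (1 + lam) ^ 2 := by
    rw [abs_of_nonneg (by positivity)]
    nlinarith
  have h4 : |lam * (1 + lam) * (1 + 6 * lam + 6 * lam ^ 2) / 24| ≤ lam * (1 + lam) ^ 3 := by
    rw [abs_of_nonneg (by positivity)]
    nlinarith
  rw [abs_of_nonneg hlam]
  gcongr

theorem logTaylor_neg (n : ℕ) (u : ℂ) : logTaylor n (-u) = -∑ k ∈ range n, u ^ k / k := by
  rw [logTaylor, ← sum_neg_distrib]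
  refine sum_congr rfl fun k _ => ?_
  rw [neg_pow u, ← mul_assoc, ← pow_add, show k + 1 + k = 2 * k + 1 by ring, pow_succ, pow_mul,
    neg_one_sq, one_pow]
  ring

theorem norm_log_one_sub_inv_add_logTaylor_five_le {u : ℂ} (hu : ‖u‖ ≤ 1 / 2) :
    ‖log (1 - u)⁻¹ + logTaylor 5 (-u)‖ ≤ 2 / 5 * ‖u‖ ^ 5 := by
  have hinv : (1 - ‖u‖)⁻¹ ≤ 2 := by
    rw [inv_le_comm₀ (by linarith) two_pos]
    linarith
  calc ‖log (1 - u)⁻¹ + logTaylor (4 + 1) (-u)‖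
      ≤ ‖u‖ ^ (4 + 1) * (1 - ‖u‖)⁻¹ / (4 + 1) :=
        norm_log_one_sub_inv_add_logTaylor_neg_le 4 (by linarith)
    _ ≤ ‖u‖ ^ 5 * 2 / 5 := by
        gcongr
        norm_num
    _ = 2 / 5 * ‖u‖ ^ 5 := by ring

theorem norm_log_inv (z : ℂ) : ‖log z⁻¹‖ = ‖log z‖ := by
  rw [log_inv_eq_ite]
  split_ifs <;> simp

theorem norm_log_le_of_one_le_re {z : ℂ} (hz : 1 ≤ z.re) : ‖log z‖ ≤ 3 * ‖z - 1‖ := by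
  have hnorm : 1 ≤ ‖z‖ := hz.trans (re_le_norm z)
  have hre : |(log z).re| ≤ ‖z - 1‖ := by
    rw [log_re, abs_of_nonneg (Real.log_nonneg hnorm)]
    have := Real.log_le_sub_one_of_pos (by linarith : 0 < ‖z‖)
    have := norm_sub_norm_le z 1
    rw [norm_one] at this
    linarith
  have him : |(log z).im| ≤ 2 * ‖z - 1‖ := by
    rw [log_im]
    have jordan := Real.mul_abs_le_abs_sin (abs_arg_le_pi_div_two_iff.mpr (by linarith))
    rw [sin_arg, abs_div, abs_of_nonneg (norm_nonneg _), div_mul_eq_mul_div,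
      div_le_iff₀ Real.pi_pos] at jordan
    have hsin : |z.im| / ‖z‖ ≤ ‖z - 1‖ :=
      (div_le_self (abs_nonneg _) hnorm).trans (by simpa using abs_im_le_norm (z - 1))
    nlinarith [mul_le_mul hsin Real.pi_le_four Real.pi_pos.le (norm_nonneg _)]
  calc ‖log z‖ ≤ |(log z).re| + |(log z).im| := norm_le_abs_re_add_abs_im _
    _ ≤ 3 * ‖z - 1‖ := by linarith

theorem one_le_re_one_sub_mul_exp_I_mul_sub_one {lam : ℝ} (hlam : 0 ≤ lam) (X : ℝ) :
    1 ≤ (1 - lam * (exp (I * X) - 1)).re := by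
  rw [mul_comm I]
  simp only [sub_re, one_re, mul_re, ofReal_re, ofReal_im, sub_im, one_im, exp_ofReal_mul_I_re,
    exp_ofReal_mul_I_im, sub_zero, zero_mul]
  nlinarith [Real.cos_le_one X]

theorem pow_succ_le_mul_one_add_pow {lam : ℝ} (hlam : 0 ≤ lam) {k n : ℕ} (hkn : k ≤ n) :
    lam ^ (k + 1) ≤ lam * (1 + lam) ^ n := by
  rw [pow_succ']
  gcongr
  calc lam ^ k ≤ (1 + lam) ^ k := pow_le_pow_left₀ hlam (by linarith) k
    _ ≤ (1 + lam) ^ n := pow_le_pow_right₀ (by linarith) hkn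

theorem mul_pow_mul_pow_succ_le {a s t c : ℝ} (ha : 0 ≤ a) (hs : 0 ≤ s) (ht : 0 ≤ t)
    (h : 1 ≤ c * (s * t)) {k n : ℕ} (hkn : k ≤ n) :
    a * s ^ k * t ^ (k + 1) ≤ c ^ (n - k) * (a * s ^ n * t ^ (n + 1)) := by
  obtain ⟨j, rfl⟩ := Nat.exists_eq_add_of_le hkn
  calc a * s ^ k * t ^ (k + 1) ≤ a * s ^ k * t ^ (k + 1) * (c * (s * t)) ^ j := by
        nth_rewrite 1 [← mul_one (a * s ^ k * t ^ (k + 1))]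
        gcongr
        exact one_le_pow₀ h
    _ = c ^ (k + j - k) * (a * s ^ (k + j) * t ^ (k + j + 1)) := by
        rw [Nat.add_sub_cancel_left]
        ring

theorem norm_log_inv_sub_geomCgfTaylor_le_of_large {lam : ℝ} (hlam : 0 ≤ lam) {X : ℝ}
    (hX : 1 ≤ 4 * ((1 + lam) * |X|)) :
    ‖log (1 - lam * (exp (I * X) - 1))⁻¹ - geomCgfTaylor lam (I * X)‖ ≤
      1250 * (lam * (1 + lam) ^ 4 * |X| ^ 5) := by
  have hlog : ‖log (1 - lam * (exp (I * X) - 1))⁻¹‖ ≤ 3 * (lam * |X|) := by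
    rw [norm_log_inv]
    refine (norm_log_le_of_one_le_re (one_le_re_one_sub_mul_exp_I_mul_sub_one hlam X)).trans ?_
    rw [sub_sub_cancel_left, norm_neg, norm_mul, Complex.norm_real, Real.norm_of_nonneg hlam]
    gcongr
    simpa using Real.norm_exp_I_mul_ofReal_sub_one_le
  have hpoly := norm_geomCgfTaylor_le hlam (I * X)
  have hmono (k : ℕ) (hk : k ≤ 4) :=
    mul_pow_mul_pow_succ_le hlam (by linarith) (abs_nonneg X) hX hk
  have h0 := hmono 0 (by norm_num)
  have h1 := hmono 1 (by norm_num)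
  have h2 := hmono 2 (by norm_num)
  have h3 := hmono 3 (by norm_num)
  simp only [sum_range_succ, sum_range_zero, zero_add, norm_mul, norm_I, one_mul,
    Complex.norm_real, Real.norm_eq_abs] at hpoly
  norm_num at hpoly h0 h1 h2 h3
  have hM : 0 ≤ lam * (1 + lam) ^ 4 * |X| ^ 5 := by positivity
  calc _ ≤ _ := norm_sub_le _ _
    _ ≤ 1250 * (lam * (1 + lam) ^ 4 * |X| ^ 5) := by linarith

theorem norm_pow_div_mul_sub_expSubOnePowTaylor_le {lam : ℝ} (hlam : 0 ≤ lam) {y : ℂ}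
    (hy : 4 * ‖y‖ ≤ 1) {k : ℕ} (hk : k < 4) :
    ‖(lam : ℂ) ^ (k + 1) / (k + 1 : ℕ) *
        ((exp y - 1) ^ (k + 1) - expSubOnePowTaylor 5 (k + 1) y)‖ ≤
      164 * (lam * (1 + lam) ^ 4 * ‖y‖ ^ 5) := by
  have hcoef : ‖(lam : ℂ) ^ (k + 1) / (k + 1 : ℕ)‖ ≤ lam * (1 + lam) ^ 4 := by
    rw [norm_div, norm_pow, Complex.norm_real, Real.norm_of_nonneg hlam, Complex.norm_natCast]
    refine (div_le_self (by positivity) ?_).trans (pow_succ_le_mul_one_add_pow hlam (by omega))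
    exact_mod_cast Nat.succ_pos k
  rw [norm_mul]
  calc _ ≤ lam * (1 + lam) ^ 4 * (164 * ‖y‖ ^ 5) :=
        mul_le_mul hcoef (norm_exp_sub_one_pow_sub_expSubOnePowTaylor_five_le (by omega) hy)
          (norm_nonneg _) (by positivity)
    _ = 164 * (lam * (1 + lam) ^ 4 * ‖y‖ ^ 5) := by ring

theorem norm_log_inv_sub_geomCgfTaylor_le_of_small {lam : ℝ} (hlam : 0 ≤ lam) {y : ℂ}
    (hy : 4 * ((1 + lam) * ‖y‖) ≤ 1) :
    ‖log (1 - lam * (exp y - 1))⁻¹ - geomCgfTaylor lam y‖ ≤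
      1250 * (lam * (1 + lam) ^ 4 * ‖y‖ ^ 5) := by
  set u : ℂ := lam * (exp y - 1)
  have hy' : 4 * ‖y‖ ≤ 1 := by nlinarith [norm_nonneg y]
  have hu : ‖u‖ ≤ 2 * (lam * ‖y‖) := by
    rw [norm_mul, Complex.norm_real, Real.norm_of_nonneg hlam]
    have := norm_exp_sub_one_le (x := y) (by linarith)
    nlinarith
  have hu_half : ‖u‖ ≤ 1 / 2 := by nlinarith [norm_nonneg y]
  have hsplit : log (1 - u)⁻¹ - geomCgfTaylor lam y = (log (1 - u)⁻¹ + logTaylor 5 (-u))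
      + ∑ k ∈ range 4, (lam : ℂ) ^ (k + 1) / (k + 1 : ℕ) *
          ((exp y - 1) ^ (k + 1) - expSubOnePowTaylor 5 (k + 1) y) := by
    rw [geomCgfTaylor_eq_sum, logTaylor_neg]
    simp only [sum_range_succ, sum_range_zero, u]
    push_cast
    ring
  have hlogTaylor : ‖log (1 - u)⁻¹ + logTaylor 5 (-u)‖ ≤
      13 * (lam * (1 + lam) ^ 4 * ‖y‖ ^ 5) := by
    have hpow : lam ^ 5 * ‖y‖ ^ 5 ≤ lam * (1 + lam) ^ 4 * ‖y‖ ^ 5 := by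
      gcongr
      exact pow_succ_le_mul_one_add_pow hlam le_rfl
    calc _ ≤ 2 / 5 * ‖u‖ ^ 5 := norm_log_one_sub_inv_add_logTaylor_five_le hu_half
      _ ≤ 2 / 5 * (2 * (lam * ‖y‖)) ^ 5 := by gcongr
      _ ≤ 13 * (lam * (1 + lam) ^ 4 * ‖y‖ ^ 5) := by
          nlinarith [pow_nonneg (norm_nonneg y) 5, pow_nonneg hlam 5]
  have hsum := (norm_sum_le _ _).trans
    (sum_le_sum fun k hk => norm_pow_div_mul_sub_expSubOnePowTaylor_le hlam hy' (mem_range.mp hk))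
  simp only [sum_const, card_range, nsmul_eq_mul, Nat.cast_ofNat] at hsum
  have hM : 0 ≤ lam * (1 + lam) ^ 4 * ‖y‖ ^ 5 := by positivity
  rw [hsplit]
  refine (norm_add_le _ _).trans ?_
  linarith

theorem norm_log_inv_sub_geomCgfTaylor_le {lam : ℝ} (hlam : 0 ≤ lam) (X : ℝ) :
    ‖log (1 - lam * (exp (I * X) - 1))⁻¹ - geomCgfTaylor lam (I * X)‖ ≤
      1250 * (lam * (1 + lam) ^ 4 * |X| ^ 5) := by
  rcases le_or_gt (4 * ((1 + lam) * |X|)) 1 with hsmall | hlarge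
  · have hnorm : ‖I * (X : ℂ)‖ = |X| := by simp
    rw [← hnorm] at hsmall ⊢
    exact norm_log_inv_sub_geomCgfTaylor_le_of_small hlam hsmall
  · exact norm_log_inv_sub_geomCgfTaylor_le_of_large hlam hlarge.le

theorem mul_one_add_pow_four_le {lam : ℝ} (hlam : 0 ≤ lam) :
    lam * (1 + lam) ^ 4 ≤ 8 * (lam + lam ^ 5) := by
  nlinarith [mul_nonneg hlam (mul_nonneg (sq_nonneg (lam - 1)) (sq_nonneg (lam + 1))),
    mul_nonneg hlam (sq_nonneg (lam - 1))]

theorem stmt_9 :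
    ∃ C : ℝ, 0 < C ∧ ∀ lam : ℝ, 0 < lam → ∀ X : ℝ,
      ∃ η : ℂ, ‖η‖ ≤ C * (lam + lam ^ 5) * |X| ^ 5 ∧
        (1 - (lam : ℂ) * (Complex.exp (Complex.I * X) - 1))⁻¹ =
          Complex.exp (Complex.I * lam * X
            - (1 / 2 : ℂ) * lam * (1 + lam) * X ^ 2
            - (Complex.I / 6) * lam * (1 + lam) * (1 + 2 * lam) * X ^ 3
            + (1 / 24 : ℂ) * lam * (1 + lam) * (1 + 6 * lam + 6 * lam ^ 2) * X ^ 4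
            + η) := by
  refine ⟨10000, by norm_num, fun lam hlam X => ?_⟩
  have hz : (1 - (lam : ℂ) * (exp (I * X) - 1))⁻¹ ≠ 0 := by
    refine inv_ne_zero fun h => ?_
    have := one_le_re_one_sub_mul_exp_I_mul_sub_one hlam.le X
    rw [h, zero_re] at this
    linarith
  refine ⟨log (1 - lam * (exp (I * X) - 1))⁻¹ - geomCgfTaylor lam (I * X), ?_, ?_⟩
  · calc _ ≤ 1250 * (lam * (1 + lam) ^ 4 * |X| ^ 5) := norm_log_inv_sub_geomCgfTaylor_le hlam.le X
      _ ≤ 10000 * (lam + lam ^ 5) * |X| ^ 5 := by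
          nlinarith [mul_one_add_pow_four_le hlam.le, pow_nonneg (abs_nonneg X) 5]
  · rw [← geomCgfTaylor_I_mul, add_sub_cancel, exp_log hz]
end

section
/- Let λ > 0 and A₂ = λ(1+λ)/2. For every real z with |z| ≤ (1/10)(1+λ)^{−1}, we have 0 ≤ (1 + 4A₂(1 − cos z))^{−1/2} ≤ exp(−A₂z² + (A₂/12 + A₂²)z⁴). -/
open Real

/-! Taking logarithms, the claim becomes `2A z² - (A/6 + 2A²) z⁴ ≤ log (1 + 4A(1 - cos z))`.
With `y = 2A z² - A z⁴/6`, the Taylor bound `cos z ≤ 1 - z²/2 + z⁴/24` gives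
`y ≤ 4A(1 - cos z)`, and `log (1 + y) ≥ y - y²/2 ≥ y - 2A²z⁴` as long as `0 ≤ y ≤ 2A z²`,
which holds for `z² ≤ 12`. -/

theorem Real.cos_le_one_sub_sq_div_two_add (x : ℝ) : cos x ≤ 1 - x ^ 2 / 2 + x ^ 4 / 24 := by
  wlog hx : 0 ≤ x
  · have h := this (-x) (by linarith)
    rwa [cos_neg, neg_sq, show (-x) ^ 4 = x ^ 4 by ring] at h
  let f (t : ℝ) : ℝ := 1 - t ^ 2 / 2 + t ^ 4 / 24 - cos t
  have hderiv (t : ℝ) : deriv f t = sin t - (t - t ^ 3 / 6) := by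
    simp (disch := fun_prop) [f]
    ring
  have hmono : MonotoneOn f (Set.Ici 0) := by
    apply monotoneOn_of_deriv_nonneg (convex_Ici 0) (by fun_prop) (by fun_prop)
    intro t ht
    rw [interior_Ici] at ht
    rw [hderiv, sub_nonneg]
    exact sin_ge_sub_cube ht.le
  have h0 : f 0 ≤ f x := hmono Set.self_mem_Ici hx hx
  norm_num [f] at h0
  linarith

theorem Real.sub_sq_div_two_le_log_one_add {y : ℝ} (hy : 0 ≤ y) :
    y - y ^ 2 / 2 ≤ log (1 + y) := by
  let f (t : ℝ) : ℝ := log (1 + t) - (t - t ^ 2 / 2)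
  have hderiv {t : ℝ} (ht : 0 ≤ t) : HasDerivAt f (t ^ 2 / (1 + t)) t := by
    have hne : 1 + t ≠ 0 := by positivity
    refine ((((hasDerivAt_id' t).const_add 1).log hne).sub
      ((hasDerivAt_id' t).sub ((hasDerivAt_pow 2 t).div_const 2))).congr_deriv ?_
    field_simp
    ring
  have hmono : MonotoneOn f (Set.Ici 0) := by
    apply monotoneOn_of_deriv_nonneg (convex_Ici 0)
    · exact fun t ht => (hderiv ht).continuousAt.continuousWithinAt
    · intro t ht
      rw [interior_Ici] at ht
      exact (hderiv ht.le).differentiableAt.differentiableWithinAt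
    · intro t ht
      rw [interior_Ici] at ht
      rw [(hderiv ht.le).deriv]
      have : 0 < 1 + t := by linarith [ht.out]
      positivity
  have h0 : f 0 ≤ f y := hmono Set.self_mem_Ici hy hy
  norm_num [f] at h0
  linarith

theorem le_log_one_add_four_mul_one_sub_cos {A z : ℝ} (hA : 0 ≤ A) (hz : z ^ 2 ≤ 12) :
    2 * A * z ^ 2 - (A / 6 + 2 * A ^ 2) * z ^ 4 ≤ log (1 + 4 * A * (1 - cos z)) := by
  set y := A * (2 * z ^ 2 - z ^ 4 / 6) with hy
  have hy_nonneg : 0 ≤ y := mul_nonneg hA (by nlinarith)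
  have hy_le : y ≤ 2 * A * z ^ 2 := by
    have : 0 ≤ A * z ^ 4 := by positivity
    linarith
  have hy_le_cos : y ≤ 4 * A * (1 - cos z) := by
    linarith [mul_le_mul_of_nonneg_left (cos_le_one_sub_sq_div_two_add z) hA]
  calc 2 * A * z ^ 2 - (A / 6 + 2 * A ^ 2) * z ^ 4 ≤ y - y ^ 2 / 2 := by
        linarith [pow_le_pow_left₀ hy_nonneg hy_le 2]
    _ ≤ log (1 + y) := sub_sq_div_two_le_log_one_add hy_nonneg
    _ ≤ log (1 + 4 * A * (1 - cos z)) := log_le_log (by positivity) (by linarith)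

theorem stmt_11 (lam : ℝ) (hlam : 0 < lam) (A₂ : ℝ) (hA₂ : A₂ = lam * (1 + lam) / 2)
    (z : ℝ) (hz : |z| ≤ (1 / 10) * (1 + lam)⁻¹) :
    0 ≤ (1 + 4 * A₂ * (1 - Real.cos z)) ^ (-(1 / 2) : ℝ) ∧
    (1 + 4 * A₂ * (1 - Real.cos z)) ^ (-(1 / 2) : ℝ)
      ≤ Real.exp (-A₂ * z ^ 2 + (A₂ / 12 + A₂ ^ 2) * z ^ 4) := by
  have hA : 0 ≤ A₂ := by rw [hA₂]; positivity
  have hz_small : |z| ≤ 1 / 10 :=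
    hz.trans (mul_le_of_le_one_right (by norm_num) (inv_le_one_of_one_le₀ (by linarith)))
  have hz2 : z ^ 2 ≤ 12 := by nlinarith [sq_abs z, abs_nonneg z]
  have hbase : 0 < 1 + 4 * A₂ * (1 - cos z) :=
    add_pos_of_pos_of_nonneg one_pos (mul_nonneg (by positivity) (sub_nonneg.2 (cos_le_one z)))
  rw [rpow_def_of_pos hbase]
  refine ⟨(exp_pos _).le, exp_le_exp.2 ?_⟩
  linarith [le_log_one_add_four_mul_one_sub_cos hA hz2]
end

section
/- There is an absolute constant C > 0 such that for every λ > 0 and every real K ≥ 1, setting A₂ = λ(1+λ)/2, t = (1/60)(1+λ)^{−1}, and g(x) = −A₂x² + (3A₂/4 + 9A₂²)x⁴, we have ∫_{−2t}^{2t} exp(K·g(x)) dx ≤ √(π/(A₂K)) · exp(C·(K^{−1} + (A₂K)^{−1})). -/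
/-!
On `[-2t, 2t]` the quartic part `b x⁴` of `K g` is at most half its quadratic part `a x²`
(`a = A₂ K`, `b = K (3A₂/4 + 9A₂²)`), so `exp (b x⁴) ≤ 1 + b x⁴ exp (a x² / 2)`. Integrating
over all of `ℝ` with the Gaussian moments of order 0 and 4 bounds the integral by
`√(π/a) (1 + 3√2 b / a²)`, where `3√2 b / a² = √2 (27 / K + 9 / (4a))`; finally `1 + y ≤ eʸ`.
-/

open MeasureTheory Real Set

lemma integral_pow_even_mul_exp_neg_mul_sq {c : ℝ} (hc : 0 < c) (k : ℕ) :
    ∫ x : ℝ, x ^ (2 * k) * exp (-c * x ^ 2) = Gamma (k + 1 / 2) / c ^ ((k : ℝ) + 1 / 2) := by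
  have h_even : ∫ x : ℝ, x ^ (2 * k) * exp (-c * x ^ 2)
      = 2 * ∫ x in Ioi (0 : ℝ), x ^ (2 * k : ℝ) * exp (-c * x ^ (2 : ℝ)) := by
    rw [← integral_comp_abs (f := fun x => x ^ (2 * k : ℝ) * exp (-c * x ^ (2 : ℝ)))]
    congr 1 with x
    norm_cast
    rw [pow_mul, pow_mul, sq_abs]
  have hk : (-1 : ℝ) < 2 * k := by linarith [k.cast_nonneg (α := ℝ)]
  rw [h_even, integral_rpow_mul_exp_neg_mul_rpow two_pos hk hc,
    show (-((2 * k : ℝ) + 1) / 2) = -((k : ℝ) + 1 / 2) by ring,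
    show ((2 * k : ℝ) + 1) / 2 = (k : ℝ) + 1 / 2 by ring, rpow_neg hc.le]
  ring

lemma integral_pow_four_mul_exp_neg_mul_sq {c : ℝ} (hc : 0 < c) :
    ∫ x : ℝ, x ^ 4 * exp (-c * x ^ 2) = 3 / (4 * c ^ 2) * √(π / c) := by
  have h := integral_pow_even_mul_exp_neg_mul_sq hc 2
  rw [Gamma_nat_add_half, rpow_add hc, rpow_natCast, ← sqrt_eq_rpow] at h
  rw [h, sqrt_div pi_nonneg]
  norm_num [Nat.doubleFactorial]
  field_simp

lemma Real.exp_le_one_add_mul_exp (y : ℝ) : exp y ≤ 1 + y * exp y := by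
  have h := mul_le_mul_of_nonneg_left (one_sub_le_exp_neg y) (exp_pos y).le
  rw [← exp_add, add_neg_cancel, exp_zero] at h
  linarith

lemma exp_neg_mul_sq_add_mul_pow_four_le {a b x : ℝ} (hb : 0 ≤ b) (hbx : b * x ^ 2 ≤ a / 2) :
    exp (-a * x ^ 2 + b * x ^ 4) ≤ exp (-a * x ^ 2) + b * (x ^ 4 * exp (-(a / 2) * x ^ 2)) := by
  have h_quartic : b * x ^ 4 ≤ a / 2 * x ^ 2 := by
    nlinarith [mul_le_mul_of_nonneg_right hbx (sq_nonneg x)]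
  have h_exp : exp (b * x ^ 4) ≤ 1 + b * x ^ 4 * exp (a / 2 * x ^ 2) :=
    (exp_le_one_add_mul_exp _).trans (by gcongr)
  calc exp (-a * x ^ 2 + b * x ^ 4)
      ≤ exp (-a * x ^ 2) * (1 + b * x ^ 4 * exp (a / 2 * x ^ 2)) := by
        rw [exp_add]; gcongr
    _ = exp (-a * x ^ 2) + b * (x ^ 4 * exp (-(a / 2) * x ^ 2)) := by
        rw [show -(a / 2) * x ^ 2 = -a * x ^ 2 + a / 2 * x ^ 2 by ring, exp_add]; ring

lemma integral_exp_neg_mul_sq_add_mul_pow_four_le {a b s : ℝ} (ha : 0 < a) (hb : 0 ≤ b)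
    (hs : 0 ≤ s) (hbs : b * s ^ 2 ≤ a / 2) :
    ∫ x in -s..s, exp (-a * x ^ 2 + b * x ^ 4) ≤ √(π / a) * (1 + 3 * √2 * b / a ^ 2) := by
  set majorant := fun x : ℝ => exp (-a * x ^ 2) + b * (x ^ 4 * exp (-(a / 2) * x ^ 2))
  have h_int_quartic : Integrable fun x : ℝ => x ^ 4 * exp (-(a / 2) * x ^ 2) := by
    have h := integrable_rpow_mul_exp_neg_mul_sq (half_pos ha) (s := 4) (by norm_num)
    simp only [show (4 : ℝ) = (4 : ℕ) by norm_num, rpow_natCast] at h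
    exact h
  have h_int : Integrable majorant :=
    (integrable_exp_neg_mul_sq ha).add (h_int_quartic.const_mul b)
  have h_total : ∫ x, majorant x = √(π / a) * (1 + 3 * √2 * b / a ^ 2) := by
    rw [integral_add (integrable_exp_neg_mul_sq ha) (h_int_quartic.const_mul b),
      integral_gaussian, integral_const_mul, integral_pow_four_mul_exp_neg_mul_sq (half_pos ha),
      show π / (a / 2) = 2 * (π / a) by ring, sqrt_mul zero_le_two]
    field_simp
    ring
  calc ∫ x in -s..s, exp (-a * x ^ 2 + b * x ^ 4)
      ≤ ∫ x in -s..s, majorant x := by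
        refine intervalIntegral.integral_mono_on (by linarith)
          (Continuous.intervalIntegrable (by fun_prop) _ _) h_int.intervalIntegrable
          fun x hx => exp_neg_mul_sq_add_mul_pow_four_le hb ?_
        exact (mul_le_mul_of_nonneg_left (sq_le_sq' hx.1 hx.2) hb).trans hbs
    _ ≤ ∫ x, majorant x := by
        rw [intervalIntegral.integral_of_le (by linarith)]
        exact setIntegral_le_integral h_int (.of_forall fun x => by positivity)
    _ = _ := h_total

lemma quartic_coeff_mul_sq_le {lam A t : ℝ} (hlam : 0 < lam) (hA : A = lam * (1 + lam) / 2)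
    (ht : t = (1 / 60) * (1 + lam)⁻¹) :
    (3 * A / 4 + 9 * A ^ 2) * (2 * t) ^ 2 ≤ A / 2 := by
  have h_gap : A / 2 - (3 * A / 4 + 9 * A ^ 2) * (2 * t) ^ 2
      = lam * (1800 * (1 + lam) ^ 2 - 3 - 18 * lam * (1 + lam)) / (7200 * (1 + lam)) := by
    subst hA ht
    field_simp
    ring
  have h_num : 0 ≤ 1800 * (1 + lam) ^ 2 - 3 - 18 * lam * (1 + lam) := by nlinarith
  rw [← sub_nonneg, h_gap]
  exact div_nonneg (mul_nonneg hlam.le h_num) (by positivity)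

lemma three_mul_sqrt_two_mul_div_sq_le {A K : ℝ} (hA : 0 < A) (hK : 0 < K) :
    3 * √2 * (K * (3 * A / 4 + 9 * A ^ 2)) / (A * K) ^ 2 ≤ 50 * (K⁻¹ + (A * K)⁻¹) := by
  have h_sqrt_two : √2 ≤ 3 / 2 := by
    rw [sqrt_le_left (by norm_num)]; norm_num
  have h_eq : 3 * √2 * (K * (3 * A / 4 + 9 * A ^ 2)) / (A * K) ^ 2
      = √2 * (27 * K⁻¹ + 9 / 4 * (A * K)⁻¹) := by
    field_simp
    ring
  rw [h_eq]
  have : 0 < K⁻¹ := by positivity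
  have : 0 < (A * K)⁻¹ := by positivity
  nlinarith

theorem stmt_12 :
    ∃ C : ℝ, 0 < C ∧ ∀ lam : ℝ, 0 < lam → ∀ K : ℝ, 1 ≤ K →
      ∀ A₂ t : ℝ, A₂ = lam * (1 + lam) / 2 → t = (1 / 60) * (1 + lam)⁻¹ →
      (∫ x in (-(2 * t))..(2 * t),
          Real.exp (K * (-A₂ * x ^ 2 + (3 * A₂ / 4 + 9 * A₂ ^ 2) * x ^ 4)))
        ≤ Real.sqrt (Real.pi / (A₂ * K)) * Real.exp (C * (K⁻¹ + (A₂ * K)⁻¹)) := by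
  refine ⟨50, by norm_num, ?_⟩
  intro lam hlam K hK A₂ t hA₂ ht
  have hK₀ : 0 < K := by linarith
  have hA₂₀ : 0 < A₂ := hA₂ ▸ by positivity
  have ht₀ : 0 ≤ t := ht ▸ by positivity
  set b := K * (3 * A₂ / 4 + 9 * A₂ ^ 2)
  have h_quartic_small : b * (2 * t) ^ 2 ≤ A₂ * K / 2 := by
    calc b * (2 * t) ^ 2 = K * ((3 * A₂ / 4 + 9 * A₂ ^ 2) * (2 * t) ^ 2) := by ring
      _ ≤ K * (A₂ / 2) := by gcongr; exact quartic_coeff_mul_sq_le hlam hA₂ ht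
      _ = A₂ * K / 2 := by ring
  calc _ = ∫ x in -(2 * t)..2 * t, exp (-(A₂ * K) * x ^ 2 + b * x ^ 4) := by
        congr 1 with x; congr 1; ring
    _ ≤ √(π / (A₂ * K)) * (1 + 3 * √2 * b / (A₂ * K) ^ 2) :=
        integral_exp_neg_mul_sq_add_mul_pow_four_le (by positivity) (by positivity)
          (by positivity) h_quartic_small
    _ ≤ √(π / (A₂ * K)) * exp (50 * (K⁻¹ + (A₂ * K)⁻¹)) := by
        gcongr
        linarith [three_mul_sqrt_two_mul_div_sq_le hA₂₀ hK₀,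
          add_one_le_exp (50 * (K⁻¹ + (A₂ * K)⁻¹))]
end
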